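/- arXiv:2202.01775 — 2 statements merged into one kernel-verified Lean document; each statement's English description precedes it below -/
import Mathlib

section
/- Let L be a free ℤ-module of rank 10 with a symmetric bilinear form b, and suppose f₁, …, fₘ ∈ L satisfy b(fᵢ, fⱼ) = 1 - δᵢⱼ for all i, j. Then m ≤ 10. (This is the bound nd(S) ≤ 10 for an Enriques surface, where Num(S) has rank 10.) -/
theorem isotropic_sequence_length_le_ten
    {L : Type*} [AddCommGroup L] [Module ℤ L] [Module.Free ℤ L] [Module.Finite ℤ L]
    (hrank : Module.finrank ℤ L = 10)
    (b : L →ₗ[ℤ] L →ₗ[ℤ] ℤ) (hsymm : ∀ x y, b x y = b y x)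
    (m : ℕ) (f : Fin m → L)
    (hf : ∀ i j, b (f i) (f j) = if i = j then 0 else 1) :
    m ≤ 10 := by
  rcases le_or_gt m 10 with h | h
  · exact h
  exfalso
  have hm : 2 ≤ m := by omega
  have hli : LinearIndependent ℤ f := by
    rw [Fintype.linearIndependent_iff]
    intro c hc
    have key : ∀ j : Fin m, (∑ i, c i) - c j = 0 := by
      intro j
      have h0 : ∑ x : Fin m, c x * (if x = j then (0:ℤ) else 1) = 0 := by
        have := congrArg (fun x => b x (f j)) hc
        simpa [hf] using this
      have : ∀ i ∈ Finset.univ, c i * (if i = j then (0:ℤ) else 1)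
          = c i - (if i = j then c i else 0) := by
        intro i _; split <;> ring
      rw [Finset.sum_congr rfl this, Finset.sum_sub_distrib,
        Finset.sum_ite_eq' Finset.univ j c, if_pos (Finset.mem_univ j)] at h0
      exact h0
    have hS : ∀ j : Fin m, c j = ∑ i, c i := by
      intro j; have := key j; linarith
    have hsum : (∑ i, c i) = m * ∑ i, c i := by
      conv_lhs => rw [Finset.sum_congr rfl (fun i _ => hS i)]
      simp [Finset.sum_const, mul_comm]
    have hz : (∑ i : Fin m, c i) = 0 := by
      have : ((m : ℤ) - 1) * ∑ i, c i = 0 := by linarith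
      rcases mul_eq_zero.mp this with h1 | h1
      · exfalso; have : (2:ℤ) ≤ m := by exact_mod_cast hm
        linarith
      · exact h1
    intro i; rw [hS i, hz]
  have := hli.fintype_card_le_finrank
  rw [Fintype.card_fin, hrank] at this
  omega
end

section
/- Let L be a unimodular lattice of rank 10 (free ℤ-module of rank 10 with symmetric bilinear form b such that the induced map L → Hom(L, ℤ) is an isomorphism), and suppose f₁, …, f₁₀ ∈ L satisfy b(fᵢ, fⱼ) = 1 - δᵢⱼ. Then f₁ + ⋯ + f₁₀ is divisible by 3 in L, i.e., there exists Δ ∈ L with 3Δ = f₁ + ⋯ + f₁₀. (This Δ is the class of the Fano polarization.) -/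
/-!
Let `s = ∑ fᵢ` and `n = 10`. The Gram matrix `J - I` of the `fᵢ` is nondegenerate, so together
with `rank L = n` no nonzero vector is orthogonal to all `fᵢ`. Hence every `x` is recovered from
its pairings `aᵢ = b(fᵢ, x)`: `(n - 1) x = ∑ᵢ (b(s, x) - (n - 1) aᵢ) fᵢ`. Pairing this with `x`
gives `(n - 1) b(x, x) = b(s, x)² - (n - 1) ∑ aᵢ²`, so `9 ∣ b(s, x)²` and `3 ∣ b(s, x)` for every
`x`. By unimodularity the functional `b(s, ·) / 3` is `b(Δ, ·)` for some `Δ`, and `3Δ = s`.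
-/

open Function Module

def IsIsotropicSequence {L ι : Type*} [AddCommGroup L] [DecidableEq ι]
    (b : L →ₗ[ℤ] L →ₗ[ℤ] ℤ) (f : ι → L) : Prop :=
  ∀ i j, b (f i) (f j) = if i = j then 0 else 1

theorem eq_zero_of_forall_sum_sub_eq_zero {ι : Type*} [Fintype ι] (hι : Fintype.card ι ≠ 1)
    {c : ι → ℤ} (h : ∀ j, ∑ i, c i - c j = 0) : c = 0 := by
  have hc : ∀ j, c j = ∑ i, c i := fun j => by linarith [h j]
  have hsum : ((Fintype.card ι : ℤ) - 1) * ∑ i, c i = 0 := by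
    have := Finset.sum_congr rfl fun j (_ : j ∈ Finset.univ) => hc j
    rw [Finset.sum_const, Finset.card_univ, nsmul_eq_mul] at this
    linarith
  have hcard : (Fintype.card ι : ℤ) - 1 ≠ 0 := sub_ne_zero.mpr (mod_cast hι)
  funext j
  rw [hc j, Pi.zero_apply]
  exact (mul_eq_zero.mp hsum).resolve_left hcard

theorem LinearMap.exists_smul_eq_of_forall_dvd {L : Type*} [AddCommGroup L]
    (φ : L →ₗ[ℤ] ℤ) (d : ℤ) (h : ∀ x, d ∣ φ x) : ∃ ψ : L →ₗ[ℤ] ℤ, d • ψ = φ := by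
  refine ⟨⟨⟨fun x => φ x / d, fun x y => ?_⟩, fun c x => ?_⟩, ?_⟩
  · rw [map_add, Int.add_ediv_of_dvd_left (h x)]
  · change φ (c • x) / d = c * (φ x / d)
    rw [map_smul, smul_eq_mul, Int.mul_ediv_assoc _ (h x)]
  · ext x
    exact Int.mul_ediv_cancel' (h x)

theorem exists_smul_eq_of_forall_dvd_apply {L : Type*} [AddCommGroup L]
    {b : L →ₗ[ℤ] L →ₗ[ℤ] ℤ} (hb : Bijective b) (d : ℤ) (s : L) (h : ∀ x, d ∣ b s x) :
    ∃ Δ : L, d • Δ = s := by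
  obtain ⟨ψ, hψ⟩ := (b s).exists_smul_eq_of_forall_dvd d h
  obtain ⟨Δ, rfl⟩ := hb.2 ψ
  exact ⟨Δ, hb.1 (by rw [map_smul, hψ])⟩

namespace IsIsotropicSequence

variable {L ι : Type*} [AddCommGroup L] {b : L →ₗ[ℤ] L →ₗ[ℤ] ℤ}
  [Fintype ι] [DecidableEq ι] {f : ι → L}

theorem apply_sum_smul (hf : IsIsotropicSequence b f) (c : ι → ℤ) (j : ι) :
    b (f j) (∑ i, c i • f i) = ∑ i, c i - c j := by
  simp only [map_sum, map_smul, hf j, smul_eq_mul, mul_ite, mul_zero, mul_one]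
  rw [Finset.sum_ite, Finset.sum_const_zero, zero_add, Finset.filter_ne,
    Finset.sum_erase_eq_sub (Finset.mem_univ j)]

theorem linearIndependent_option (hf : IsIsotropicSequence b f) (hb : Injective b)
    (hι : Fintype.card ι ≠ 1) {w : L} (hw0 : w ≠ 0) (hw : ∀ j, b (f j) w = 0) :
    LinearIndependent ℤ (fun o : Option ι => o.elim w f) := by
  rw [Fintype.linearIndependent_iff]
  intro g hg
  simp only [Fintype.sum_option, Option.elim_none, Option.elim_some] at hg
  have hc : (fun i => g (some i)) = 0 := by
    refine eq_zero_of_forall_sum_sub_eq_zero hι fun j => ?_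
    have := congrArg (b (f j)) hg
    rwa [map_add, map_smul, hw j, smul_zero, zero_add, hf.apply_sum_smul,
      map_zero] at this
  have hnone : g none = 0 := by
    simp only [fun i => congrFun hc i, Pi.zero_apply, zero_smul, Finset.sum_const_zero,
      add_zero] at hg
    have := hb.moduleIsTorsionFree _ (map_smul b)
    exact (smul_eq_zero.mp hg).resolve_right hw0
  rintro (_ | i)
  · exact hnone
  · exact congrFun hc i

theorem eq_zero_of_forall_apply_eq_zero [Module.Finite ℤ L] (hf : IsIsotropicSequence b f)
    (hb : Injective b) (hrank : finrank ℤ L = Fintype.card ι) (hι : Fintype.card ι ≠ 1) {w : L}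
    (hw : ∀ j, b (f j) w = 0) : w = 0 := by
  by_contra hw0
  have := (hf.linearIndependent_option hb hι hw0 hw).fintype_card_le_finrank
  rw [hrank, Fintype.card_option] at this
  omega

theorem card_sub_one_smul_eq_sum (hf : IsIsotropicSequence b f)
    (hker : ∀ w, (∀ j, b (f j) w = 0) → w = 0) (x : L) :
    ((Fintype.card ι : ℤ) - 1) • x
      = ∑ i, (b (∑ j, f j) x - (Fintype.card ι - 1) * b (f i) x) • f i := by
  rw [← sub_eq_zero]
  refine hker _ fun j => ?_
  rw [map_sub, map_smul, hf.apply_sum_smul, Finset.sum_sub_distrib, Finset.sum_const,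
    Finset.card_univ, ← Finset.mul_sum, map_sum, LinearMap.sum_apply,
    nsmul_eq_mul, smul_eq_mul]
  ring

theorem card_sub_one_dvd_sq (hf : IsIsotropicSequence b f)
    (hker : ∀ w, (∀ j, b (f j) w = 0) → w = 0) (x : L) :
    ((Fintype.card ι : ℤ) - 1) ∣ b (∑ j, f j) x ^ 2 := by
  have h := congrArg (fun y => b y x) (hf.card_sub_one_smul_eq_sum hker x)
  simp only [map_smul, map_sum, LinearMap.smul_apply, LinearMap.sum_apply,
    smul_eq_mul, sub_mul, Finset.sum_sub_distrib, ← Finset.mul_sum, mul_assoc] at h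
  rw [map_sum, LinearMap.sum_apply]
  exact ⟨b x x + ∑ i, b (f i) x * b (f i) x, by linear_combination -h⟩

end IsIsotropicSequence

theorem fano_polarization_exists_general
    {L : Type*} [AddCommGroup L] [Module ℤ L] [Module.Finite ℤ L]
    (hrank : Module.finrank ℤ L = 10)
    (b : L →ₗ[ℤ] L →ₗ[ℤ] ℤ)
    (hunimod : Function.Bijective (fun x : L => b x))
    (f : Fin 10 → L)
    (hf : ∀ i j, b (f i) (f j) = if i = j then 0 else 1) :
    ∃ Δ : L, (3 : ℤ) • Δ = ∑ i, f i := by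
  obtain rfl : ‹Module ℤ L› = AddCommGroup.toIntModule L := Subsingleton.elim _ _
  have hf : IsIsotropicSequence b f := hf
  have hker : ∀ w, (∀ j, b (f j) w = 0) → w = 0 := fun _ =>
    hf.eq_zero_of_forall_apply_eq_zero hunimod.injective (by rw [hrank, Fintype.card_fin])
      (by rw [Fintype.card_fin]; decide)
  refine exists_smul_eq_of_forall_dvd_apply hunimod 3 _ fun x => ?_
  have h9 : (9 : ℤ) ∣ b (∑ j, f j) x ^ 2 := by
    simpa using hf.card_sub_one_dvd_sq hker x
  exact Int.prime_three.dvd_of_dvd_pow (dvd_trans ⟨3, rfl⟩ h9)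

theorem fano_polarization_exists
    {L : Type*} [AddCommGroup L] [Module ℤ L] [Module.Free ℤ L] [Module.Finite ℤ L]
    (hrank : Module.finrank ℤ L = 10)
    (b : L →ₗ[ℤ] L →ₗ[ℤ] ℤ) (hsymm : ∀ x y, b x y = b y x)
    (hunimod : Function.Bijective (fun x : L => b x))
    (f : Fin 10 → L)
    (hf : ∀ i j, b (f i) (f j) = if i = j then 0 else 1) :
    ∃ Δ : L, (3 : ℤ) • Δ = ∑ i, f i :=
  fano_polarization_exists_general hrank b hunimod f hf
end
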